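/- Successor equivalence of the Average Forest measure: for any arc (i₀,j₀) of Γ, and for every node k that is j₀ itself or a successor of j₀ in Γ, AF_k(N,v,Γ) = AF_k(N,v,Γ−(i₀,j₀)), where Γ−(i₀,j₀) is Γ with the arc (i₀,j₀) removed. -/

import Mathlib

open scoped Classical
open Finset

section Preamble

variable {V : Type*} [Fintype V] [DecidableEq V]

/-- Adjacency relation of a digraph given by its arc set. -/
def Adj (A : Finset (V × V)) (i j : V) : Prop := (i, j) ∈ A

/-- A digraph is circuit-free if it contains no directed cycle. -/
def CircuitFree (A : Finset (V × V)) : Prop :=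
  ∀ i : V, ¬ Relation.TransGen (Adj A) i i

/-- In-degree of a node. -/
def inDeg (A : Finset (V × V)) (j : V) : ℕ :=
  (A.filter (fun a => a.2 = j)).card

/-- Weak connectivity (chains, ignoring orientation). -/
def WConn (A : Finset (V × V)) (i j : V) : Prop :=
  Relation.ReflTransGen (fun a b => (a, b) ∈ A ∨ (b, a) ∈ A) i j

/-- The weakly connected component of `i`, as a finset. -/
noncomputable def compF (A : Finset (V × V)) (i : V) : Finset V :=
  Finset.univ.filter (fun j => WConn A i j)

/-- `IsPath A p` : `p` is a (nonempty) directed path along arcs of `A`. -/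
def IsPath (A : Finset (V × V)) : List V → Prop
  | [] => False
  | [_] => True
  | i :: j :: l => (i, j) ∈ A ∧ IsPath A (j :: l)

/-- The digraph `A` restricted to the node set `K` is an arborescence:
there is a root `r ∈ K` with a unique directed path from `r` to every node of `K`. -/
def IsArbOn (A : Finset (V × V)) (K : Set V) : Prop :=
  ∃ r ∈ K, ∀ i ∈ K, ∃! p : List V,
    IsPath A p ∧ p.head? = some r ∧ p.getLast? = some i

/-- A forest: every weakly connected component is an arborescence. -/
def IsForest (A : Finset (V × V)) : Prop :=
  ∀ i : V, IsArbOn A {j | WConn A i j}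

/-- `F` is a maximal spanning forest of the digraph `A`. -/
def IsMaxSpanningForest (A F : Finset (V × V)) : Prop :=
  F ⊆ A ∧ IsForest F ∧ ∀ a ∈ A, a ∉ F → ¬ IsForest (insert a F)

/-- The collection of all maximal spanning forests of `A`. -/
noncomputable def maxForests (A : Finset (V × V)) : Finset (Finset (V × V)) :=
  A.powerset.filter (fun F => IsMaxSpanningForest A F)

/-- `S̄_F(i)` : the node `i` together with all its successors in `F`. -/
noncomputable def succSet (F : Finset (V × V)) (i : V) : Finset V :=
  Finset.univ.filter (fun j => Relation.ReflTransGen (Adj F) i j)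

/-- `Ŝ_F(i)` : the immediate successors of `i` in `F`. -/
noncomputable def immSucc (F : Finset (V × V)) (i : V) : Finset V :=
  Finset.univ.filter (fun j => (i, j) ∈ F)

/-- Marginal contribution of player `i` with respect to the forest `F`. -/
noncomputable def marg (v : Finset V → ℝ) (F : Finset (V × V)) (i : V) : ℝ :=
  v (succSet F i) - ∑ j ∈ immSucc F i, v (succSet F j)

/-- The Average Forest leadership measure. -/
noncomputable def AF (v : Finset V → ℝ) (A : Finset (V × V)) (i : V) : ℝ :=
  (∑ F ∈ maxForests A, marg v F i) / (maxForests A).card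

/-- The node sets of the arborescence components of a forest `F`. -/
noncomputable def comps (F : Finset (V × V)) : Finset (Finset V) :=
  Finset.univ.image (fun i => compF F i)

/-- Productivity of the organisational situation. -/
noncomputable def Productivity (v : Finset V → ℝ) (A : Finset (V × V)) : ℝ :=
  (∑ F ∈ maxForests A, ∑ K ∈ comps F, v K) / (maxForests A).card

/-- Superadditivity of a TU game. -/
def Superadditive (v : Finset V → ℝ) : Prop :=
  ∀ S Q : Finset V, Disjoint S Q → v S + v Q ≤ v (S ∪ Q)

/-- Weak connectedness of the digraph. -/
def WeaklyConnected (A : Finset (V × V)) : Prop :=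
  ∀ i j : V, WConn A i j

/-- Quasi-strong connectedness: existence of a root reaching every node. -/
def HasRoot (A : Finset (V × V)) : Prop :=
  ∃ r : V, ∀ i : V, Relation.ReflTransGen (Adj A) r i

end Preamble

/-! In a circuit-free digraph the maximal spanning forests are exactly the arc sets choosing one
entering arc at every node that has one. So a maximal forest of `A` amounts to a maximal forest of
`A` with all arcs into `j₀` deleted together with one arc into `j₀` (if there is any), and likewise
for `A − (i₀, j₀)`; once the arcs into `j₀` are deleted, the two digraphs coincide. The choice of the arc
into `j₀` does not affect the marginal contribution of a node `k` below `j₀`, since by acyclicity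
no node reachable from `k` reaches the tail of that arc. Hence both averages equal the average over
the maximal forests of `A` without arcs into `j₀`. -/

open Relation

section Paths

variable {V : Type*} {F : Finset (V × V)}

theorem isPath_iff_isChain {p : List V} : IsPath F p ↔ p ≠ [] ∧ p.IsChain (Adj F) := by
  induction p using List.twoStepInduction with
  | nil => simp [IsPath]
  | singleton x => simp [IsPath]
  | cons_cons x y l _ ih => simp [IsPath, ih y, Adj]

theorem exists_isPath_of_reflTransGen {a b : V} (h : ReflTransGen (Adj F) a b) :
    ∃ p, IsPath F p ∧ p.head? = some a ∧ p.getLast? = some b := by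
  obtain ⟨p, hp, hpc, rfl, rfl⟩ := List.exists_isChain_ne_nil_of_relationReflTransGen h
  exact ⟨p, isPath_iff_isChain.2 ⟨hp, hpc⟩, List.head?_eq_some_head hp,
    List.getLast?_eq_some_getLast hp⟩

theorem isPath_append_singleton {p : List V} {a b : V} (ha : p.getLast? = some a) :
    IsPath F (p ++ [b]) ↔ IsPath F p ∧ (a, b) ∈ F := by
  have hp : p ≠ [] := by rintro rfl; simp at ha
  simp [isPath_iff_isChain, List.isChain_append, hp, ha, Adj]

theorem IsPath.eq_of_head?_of_getLast? (hpar : ∀ ⦃a b c⦄, (a, c) ∈ F → (b, c) ∈ F → a = b)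
    {r j : V} (hr : ∀ i, (i, r) ∉ F) {p q : List V} (hp : IsPath F p) (hq : IsPath F q)
    (hph : p.head? = some r) (hqh : q.head? = some r)
    (hpl : p.getLast? = some j) (hql : q.getLast? = some j) : p = q := by
  induction p using List.reverseRecOn generalizing q j with
  | nil => exact hp.elim
  | append_singleton p x ih =>
    obtain rfl : x = j := by simpa using hpl
    obtain rfl | ⟨q, y, rfl⟩ := q.eq_nil_or_concat'
    · simp at hql
    obtain rfl : x = y := by simp at hql; exact hql.symm
    rcases p.eq_nil_or_concat' with rfl | ⟨p, a, rfl⟩ <;>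
      rcases q.eq_nil_or_concat' with rfl | ⟨q, b, rfl⟩
    · rfl
    · obtain rfl : x = r := by simpa using hph
      exact absurd ((isPath_append_singleton (by simp)).1 hq).2 (hr b)
    · obtain rfl : x = r := by simpa using hqh
      exact absurd ((isPath_append_singleton (by simp)).1 hp).2 (hr a)
    · obtain ⟨hpa, hax⟩ := (isPath_append_singleton (a := a) (by simp)).1 hp
      obtain ⟨hqb, hbx⟩ := (isPath_append_singleton (a := b) (by simp)).1 hq
      obtain rfl := hpar hax hbx
      rw [ih (j := a) hpa hqb (by simpa using hph) (by simpa using hqh) (by simp) (by simp)]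

end Paths

section Roots

variable {V : Type*} {F : Finset (V × V)}

theorem CircuitFree.mono {A : Finset (V × V)} (hA : CircuitFree A) (hF : F ⊆ A) :
    CircuitFree F :=
  fun i hi => hA i (TransGen.mono (fun _ _ h => hF h) _ _ hi)

theorem CircuitFree.exists_root [Finite V] (hF : CircuitFree F) (j : V) :
    ∃ r, ReflTransGen (Adj F) r j ∧ ∀ i, (i, r) ∉ F := by
  have : Std.Irrefl (TransGen (Adj F)) := ⟨hF⟩
  obtain ⟨r, hr, hmin⟩ := (Finite.wellFounded_of_trans_of_irrefl (TransGen (Adj F))).has_min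
    {r | ReflTransGen (Adj F) r j} ⟨j, .refl⟩
  exact ⟨r, hr, fun i hi => hmin i (ReflTransGen.head hi hr) (.single hi)⟩

variable (hpar : ∀ ⦃a b c⦄, (a, c) ∈ F → (b, c) ∈ F → a = b)
include hpar

theorem reflTransGen_total_of_common_descendant {a b j : V} (ha : ReflTransGen (Adj F) a j)
    (hb : ReflTransGen (Adj F) b j) : ReflTransGen (Adj F) a b ∨ ReflTransGen (Adj F) b a := by
  induction ha generalizing b with
  | refl => exact Or.inr hb
  | tail hay hyj ih =>
    rcases hb.cases_tail with rfl | ⟨c, hbc, hcj⟩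
    · exact Or.inl (hay.tail hyj)
    · exact ih (hpar hyj hcj ▸ hbc)

theorem eq_of_reflTransGen_of_forall_not_mem {r r' j : V} (hr : ∀ i, (i, r) ∉ F)
    (hr' : ∀ i, (i, r') ∉ F) (h : ReflTransGen (Adj F) r j) (h' : ReflTransGen (Adj F) r' j) :
    r = r' := by
  have of_reach {a b : V} (hab : ReflTransGen (Adj F) a b) (hb : ∀ i, (i, b) ∉ F) : b = a :=
    hab.cases_tail.resolve_right fun ⟨c, _, hc⟩ => hb c hc
  rcases reflTransGen_total_of_common_descendant hpar h h' with hrr' | hr'r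
  · exact (of_reach hrr' hr').symm
  · exact of_reach hr'r hr

theorem isForest_of_parent_unique [Finite V] (hF : CircuitFree F) : IsForest F := by
  -- `root j` is the unique ancestor of `j` without predecessor; it is constant on components.
  choose root hroot hroot_top using hF.exists_root
  have root_eq {a b : V} (h : WConn F a b) : root a = root b := by
    induction h with
    | refl => rfl
    | @tail b c _ hbc ih =>
      rw [ih]
      rcases hbc with hbc | hcb
      · exact eq_of_reflTransGen_of_forall_not_mem hpar (hroot_top b) (hroot_top c)
          ((hroot b).tail hbc) (hroot c)
      · exact eq_of_reflTransGen_of_forall_not_mem hpar (hroot_top b) (hroot_top c)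
          (hroot b) ((hroot c).tail hcb)
  intro i
  refine ⟨root i, ReflTransGen.mono (fun _ _ h => Or.inr h) _ _ (reflTransGen_swap.2 (hroot i)),
    fun j hj => ?_⟩
  rw [root_eq hj]
  obtain ⟨p, hp, hph, hpl⟩ := exists_isPath_of_reflTransGen (hroot j)
  exact ⟨p, ⟨hp, hph, hpl⟩, fun q ⟨hq, hqh, hql⟩ =>
    hq.eq_of_head?_of_getLast? hpar (hroot_top j) hp hqh hph hql hpl⟩

end Roots

theorem IsForest.eq_of_mem_of_mem {V : Type*} {F : Finset (V × V)} (hF : IsForest F)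
    {a b c : V} (ha : (a, c) ∈ F) (hb : (b, c) ∈ F) : a = b := by
  obtain ⟨r, -, hpath⟩ := hF c
  have path_through {x : V} (hx : (x, c) ∈ F) : ∃ p, IsPath F (p ++ [c]) ∧
      (p ++ [c]).head? = some r ∧ (p ++ [c]).getLast? = some c ∧ p.getLast? = some x := by
    obtain ⟨p, ⟨hp, hph, hpl⟩, -⟩ := hpath x (.single (Or.inr hx))
    exact ⟨p, (isPath_append_singleton hpl).2 ⟨hp, hx⟩, by simp [List.head?_append, hph], by simp,
      hpl⟩
  obtain ⟨pa, hpa, hpah, hpal, hpa'⟩ := path_through ha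
  obtain ⟨pb, hpb, hpbh, hpbl, hpb'⟩ := path_through hb
  have := List.append_cancel_right ((hpath c .refl).unique ⟨hpa, hpah, hpal⟩ ⟨hpb, hpbh, hpbl⟩)
  subst this
  simpa [hpa'] using hpb'

section InDegree

variable {V : Type*} [DecidableEq V] {F G : Finset (V × V)} {j : V}

theorem inDeg_le_one_iff : inDeg F j ≤ 1 ↔ ∀ ⦃a b⦄, (a, j) ∈ F → (b, j) ∈ F → a = b := by
  simp only [inDeg, Finset.card_le_one, Finset.mem_filter, and_imp, Prod.forall]
  exact ⟨fun h a b ha hb => congrArg Prod.fst (h a j ha rfl b j hb rfl),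
    fun h a _ ha hja b _ hb hjb => by subst hja hjb; rw [h ha hb]⟩

theorem inDeg_pos_iff : 0 < inDeg F j ↔ ∃ i, (i, j) ∈ F := by
  simp [inDeg, Finset.card_pos, Finset.Nonempty]

theorem inDeg_mono (h : F ⊆ G) (j : V) : inDeg F j ≤ inDeg G j :=
  Finset.card_le_card (Finset.filter_subset_filter _ h)

theorem inDeg_insert {e : V × V} (he : e ∉ F) (j : V) :
    inDeg (insert e F) j = inDeg F j + if e.2 = j then 1 else 0 := by
  unfold inDeg
  rw [Finset.filter_insert]
  split_ifs with h
  · exact Finset.card_insert_of_notMem fun h' => he (Finset.mem_filter.1 h').1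
  · rfl

theorem inDeg_filter_snd_ne (j m : V) :
    inDeg (F.filter (·.2 ≠ j)) m = if m = j then 0 else inDeg F m := by
  unfold inDeg
  rw [Finset.filter_filter]
  split_ifs with h
  · simp [h]
  · congr 1
    exact Finset.filter_congr fun a _ => by grind

theorem isForest_iff_inDeg_le_one [Finite V] (hF : CircuitFree F) :
    IsForest F ↔ ∀ j, inDeg F j ≤ 1 := by
  simp only [inDeg_le_one_iff]
  exact ⟨fun h _ _ _ => h.eq_of_mem_of_mem,
    fun h => isForest_of_parent_unique (fun _ _ c ha hb => h c ha hb) hF⟩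

end InDegree

section MaxForests

variable {V : Type*} [DecidableEq V] {A F X : Finset (V × V)} {j : V}

theorem subset_of_mem_maxForests (hF : F ∈ maxForests A) : F ⊆ A :=
  Finset.mem_powerset.1 (Finset.mem_filter.1 hF).1

theorem mem_maxForests_iff [Finite V] (hA : CircuitFree A) :
    F ∈ maxForests A ↔ F ⊆ A ∧ ∀ j, inDeg F j = min (inDeg A j) 1 := by
  rw [maxForests, Finset.mem_filter, Finset.mem_powerset, IsMaxSpanningForest, and_self_left,
    and_congr_right_iff]
  intro hFA
  have forest_iff {G : Finset (V × V)} (hG : G ⊆ A) : IsForest G ↔ ∀ j, inDeg G j ≤ 1 :=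
    isForest_iff_inDeg_le_one (hA.mono hG)
  rw [forest_iff hFA]
  constructor
  · rintro ⟨hF, hmax⟩ j
    have hFj := hF j
    have hFAj := inDeg_mono hFA j
    by_contra hne
    obtain ⟨i, hi⟩ := inDeg_pos_iff.1 (by omega : 0 < inDeg A j)
    have hiF : (i, j) ∉ F := fun h => hne (by have := inDeg_pos_iff.2 ⟨i, h⟩; omega)
    refine hmax _ hi hiF ((forest_iff (Finset.insert_subset hi hFA)).2 fun m => ?_)
    rw [inDeg_insert hiF]
    split_ifs with hjm
    · obtain rfl : j = m := hjm
      omega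
    · exact hF m
  · intro hdeg
    refine ⟨fun j => by rw [hdeg j]; omega, fun a ha haF hins => ?_⟩
    have h1 := (forest_iff (Finset.insert_subset ha hFA)).1 hins a.2
    have h2 := inDeg_pos_iff.2 ⟨a.1, ha⟩
    rw [inDeg_insert haF, if_pos rfl, hdeg] at h1
    omega

end MaxForests

section Decomposition

variable {V : Type*} [DecidableEq V] {B X : Finset (V × V)} {e : V × V} {j : V}

theorem filter_snd_ne_insert (he : e.2 = j) (hB : ∀ b ∈ B, b.2 ≠ j) :
    (insert e B).filter (·.2 ≠ j) = B := by
  rw [Finset.filter_insert, if_neg (not_not.2 he), Finset.filter_true_of_mem hB]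

theorem filter_snd_eq_insert (he : e.2 = j) (hB : ∀ b ∈ B, b.2 ≠ j) :
    (insert e B).filter (·.2 = j) = {e} := by
  rw [Finset.filter_insert, if_pos he, Finset.filter_false_of_mem hB, Finset.insert_empty]

theorem injOn_insert_maxForests_filter_snd_ne :
    Set.InjOn (fun p : Finset (V × V) × (V × V) => insert p.2 p.1)
      (maxForests (X.filter (·.2 ≠ j)) ×ˢ X.filter (·.2 = j) : Finset _) := by
  rintro ⟨B, e⟩ hp ⟨B', e'⟩ hp' h
  simp only [Finset.coe_product, Set.mem_prod, Finset.mem_coe, Finset.mem_filter] at hp hp' h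
  have arcs_ne {C : Finset (V × V)} (hC : C ∈ maxForests (X.filter (·.2 ≠ j))) :
      ∀ b ∈ C, b.2 ≠ j :=
    fun b hb => (Finset.mem_filter.1 (subset_of_mem_maxForests hC hb)).2
  have h₁ := congrArg (·.filter (·.2 ≠ j)) h
  have h₂ := congrArg (·.filter (·.2 = j)) h
  simp only [filter_snd_ne_insert hp.2.2 (arcs_ne hp.1),
    filter_snd_ne_insert hp'.2.2 (arcs_ne hp'.1), filter_snd_eq_insert hp.2.2 (arcs_ne hp.1),
    filter_snd_eq_insert hp'.2.2 (arcs_ne hp'.1), Finset.singleton_inj] at h₁ h₂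
  rw [h₁, h₂]

theorem maxForests_eq_image [Finite V] (hX : CircuitFree X) (hj : 0 < inDeg X j) :
    maxForests X = (maxForests (X.filter (·.2 ≠ j)) ×ˢ X.filter (·.2 = j)).image
      (fun p => insert p.2 p.1) := by
  ext F
  simp only [Finset.mem_image, Finset.mem_product, mem_maxForests_iff hX,
    mem_maxForests_iff (hX.mono (Finset.filter_subset _ X)), inDeg_filter_snd_ne, Finset.mem_filter]
  constructor
  · rintro ⟨hFX, hdeg⟩
    obtain ⟨e, he⟩ := Finset.card_eq_one.1 (show inDeg F j = 1 by rw [hdeg]; omega)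
    obtain ⟨heF, hej⟩ := Finset.mem_filter.1 (he ▸ Finset.mem_singleton_self e)
    refine ⟨(F.filter (·.2 ≠ j), e), ⟨⟨Finset.filter_subset_filter _ hFX, fun m => ?_⟩,
      hFX heF, hej⟩, ?_⟩
    · rw [inDeg_filter_snd_ne, hdeg]
      split_ifs <;> rfl
    · rw [Finset.insert_eq, ← he]
      exact Finset.filter_union_filter_not_eq _ _
  · rintro ⟨⟨B, e⟩, ⟨⟨hBX, hBdeg⟩, heX, hej⟩, rfl⟩
    have heB : e ∉ B := fun h => (Finset.mem_filter.1 (hBX h)).2 hej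
    refine ⟨Finset.insert_subset heX (hBX.trans (Finset.filter_subset _ _)), fun m => ?_⟩
    rw [inDeg_insert heB, hBdeg, hej]
    rcases eq_or_ne j m with rfl | hjm
    · simp only [if_pos, min_eq_left zero_le_one, zero_add]
      omega
    · simp [hjm, hjm.symm]

end Decomposition

theorem reflTransGen_of_reflTransGen_insert {V : Type*} [DecidableEq V] {F : Finset (V × V)}
    {e : V × V} {m x : V}
    (hm : ¬ ReflTransGen (Adj (insert e F)) m e.1) (h : ReflTransGen (Adj (insert e F)) m x) :
    ReflTransGen (Adj F) m x := by
  induction h with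
  | refl => exact .refl
  | @tail y z hmy hyz ih =>
    rcases Finset.mem_insert.1 hyz with rfl | hyz
    · exact absurd hmy hm
    · exact ih.tail hyz

section Marginal

variable {V : Type*} [Fintype V] [DecidableEq V] {F : Finset (V × V)} {e : V × V}

theorem succSet_insert_of_not_reach {m : V} (hm : ¬ ReflTransGen (Adj (insert e F)) m e.1) :
    succSet (insert e F) m = succSet F m := by
  ext x
  simp only [succSet, Finset.mem_filter, Finset.mem_univ, true_and]
  exact ⟨reflTransGen_of_reflTransGen_insert hm,
    ReflTransGen.mono (fun _ _ h => Finset.mem_insert_of_mem h) _ _⟩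

theorem immSucc_insert_of_ne {m : V} (hm : m ≠ e.1) : immSucc (insert e F) m = immSucc F m := by
  ext x
  simp only [immSucc, Finset.mem_filter, Finset.mem_univ, true_and, Finset.mem_insert,
    or_iff_right_iff_imp]
  rintro rfl
  exact absurd rfl hm

theorem marg_insert_of_not_reach (v : Finset V → ℝ) {k : V}
    (hk : ¬ ReflTransGen (Adj (insert e F)) k e.1) : marg v (insert e F) k = marg v F k := by
  have hke : k ≠ e.1 := fun h => hk (h ▸ .refl)
  unfold marg
  rw [succSet_insert_of_not_reach hk, immSucc_insert_of_ne hke]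
  congr 1
  refine Finset.sum_congr rfl fun i hi => congrArg v (succSet_insert_of_not_reach fun hi' => hk ?_)
  have hki : (k, i) ∈ F := by simpa [immSucc] using hi
  exact ReflTransGen.head (Finset.mem_insert_of_mem hki) hi'

theorem marg_insert_of_reflTransGen (v : Finset V → ℝ) {A : Finset (V × V)}
    (hA : CircuitFree A) (hF : F ⊆ A) {i j k : V} (he : (i, j) ∈ A)
    (hk : ReflTransGen (Adj A) j k) : marg v (insert (i, j) F) k = marg v F k :=
  marg_insert_of_not_reach v fun hki => hA i <| TransGen.head' he <|
    hk.trans (ReflTransGen.mono (fun _ _ h => Finset.insert_subset he hF h) _ _ hki)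

end Marginal

section AverageForest

variable {V : Type*} [Fintype V] [DecidableEq V] {X : Finset (V × V)}

theorem AF_filter_snd_ne (v : Finset V → ℝ) (hX : CircuitFree X) {j k : V}
    (hinv : ∀ B ⊆ X, ∀ e ∈ X, e.2 = j → marg v (insert e B) k = marg v B k) :
    AF v (X.filter (·.2 ≠ j)) k = AF v X k := by
  rcases (inDeg X j).eq_zero_or_pos with h0 | hj
  · have hXj : ∀ a ∈ X, a.2 ≠ j := fun a ha haj => (inDeg_pos_iff.2 ⟨a.1, haj ▸ ha⟩).ne' h0
    rw [Finset.filter_true_of_mem hXj]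
  have hsum : ∀ B ∈ maxForests (X.filter (·.2 ≠ j)),
      ∑ e ∈ X.filter (·.2 = j), marg v (insert e B) k = #(X.filter (·.2 = j)) * marg v B k := by
    intro B hB
    have hBX : B ⊆ X := (subset_of_mem_maxForests hB).trans (Finset.filter_subset _ _)
    rw [← nsmul_eq_mul, ← Finset.sum_const]
    exact Finset.sum_congr rfl fun e he => hinv B hBX e (Finset.mem_filter.1 he).1
      (Finset.mem_filter.1 he).2
  unfold AF
  rw [maxForests_eq_image hX hj, Finset.sum_image injOn_insert_maxForests_filter_snd_ne,
    Finset.card_image_of_injOn injOn_insert_maxForests_filter_snd_ne, Finset.sum_product,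
    Finset.card_product, Finset.sum_congr rfl hsum, ← Finset.mul_sum]
  have hcard : (#(X.filter (·.2 = j)) : ℝ) ≠ 0 := by exact_mod_cast hj.ne'
  push_cast
  rw [mul_comm, mul_div_mul_right _ _ hcard]

end AverageForest

theorem AF_successor_equivalence_general {V : Type*} [Fintype V] [DecidableEq V]
    (A : Finset (V × V)) (hA : CircuitFree A) (v : Finset V → ℝ)
    (i₀ j₀ : V) :
    ∀ k : V, Relation.ReflTransGen (Adj A) j₀ k →
      AF v A k = AF v (A.erase (i₀, j₀)) k := by
  intro k hk
  have hinv : ∀ X ⊆ A, ∀ B ⊆ X, ∀ e ∈ X, e.2 = j₀ → marg v (insert e B) k = marg v B k := by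
    rintro X hXA B hBX ⟨i, j⟩ he rfl
    exact marg_insert_of_reflTransGen v hA (hBX.trans hXA) (hXA he) hk
  have hA' : A.erase (i₀, j₀) ⊆ A := Finset.erase_subset _ _
  have hfilter : (A.erase (i₀, j₀)).filter (·.2 ≠ j₀) = A.filter (·.2 ≠ j₀) := by
    rw [Finset.filter_erase, Finset.erase_eq_of_notMem]
    simp
  calc AF v A k = AF v (A.filter (·.2 ≠ j₀)) k := (AF_filter_snd_ne v hA (hinv A subset_rfl)).symm
    _ = AF v ((A.erase (i₀, j₀)).filter (·.2 ≠ j₀)) k := by rw [hfilter]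
    _ = AF v (A.erase (i₀, j₀)) k := AF_filter_snd_ne v (hA.mono hA') (hinv _ hA')

/-- successor equivalence of the Average Forest measure: deleting an arc
`(i₀, j₀)` does not change the value of `j₀` or of any of its successors. -/
theorem AF_successor_equivalence {V : Type*} [Fintype V] [DecidableEq V]
    (A : Finset (V × V)) (hA : CircuitFree A) (v : Finset V → ℝ)
    (i₀ j₀ : V) (ha : (i₀, j₀) ∈ A) :
    ∀ k : V, Relation.ReflTransGen (Adj A) j₀ k →
      AF v A k = AF v (A.erase (i₀, j₀)) k :=
  AF_successor_equivalence_general A hA v i₀ j₀
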